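/- arXiv:1711.09310 — 4 statements merged into one kernel-verified Lean document; each statement's English description precedes it below -/
import Mathlib

section
/- Let P ⊂ ℝ^d be a centrally symmetric polytope with nonempty interior, and let u and v be vertices (extreme points) of P, so that −v is also a vertex of P. If the translates P + u and P + v have intersecting interiors, then the midpoint (u − v)/2 = (u + (−v))/2 lies in the interior of P; consequently, if moreover u ≠ −v and the segment [u, −v] is not all of P, the closed segment [u, −v] is not a face of P (in particular, u and −v are not connected by an edge of P). -/
open Set

/-- A polytope: the convex hull of a finite set of points. -/
def IsPolytope {E : Type*} [AddCommGroup E] [Module ℝ E] (P : Set E) : Prop :=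
  ∃ V : Finset E, P = convexHull ℝ (V : Set E)

/-- A (nonempty, proper) exposed face of `P`. -/
def IsProperFace {E : Type*} [AddCommGroup E] [Module ℝ E] [TopologicalSpace E]
    (P F : Set E) : Prop :=
  F.Nonempty ∧ F ≠ P ∧ IsExposed ℝ P F

/-!
If `y + u = z + v` with `y, z` interior points of `P`, then `-y` is interior by symmetry, and
`(u - v) / 2 = (z + (-y)) / 2` is interior by convexity. An extreme subset of `P` other than `P`
misses the interior of `P`: from an interior point `m` one can step a little beyond `m` away from
any `p ∈ P`, exhibiting `m` inside an open segment of `P` with endpoint `p`. So the segment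
`[u, -v]`, which contains the midpoint, cannot be a proper face.
-/

open Filter Topology

lemma mem_openSegment_add_smul_sub {E : Type*} [AddCommGroup E] [Module ℝ E] (p m : E) {t : ℝ}
    (ht : 0 < t) : m ∈ openSegment ℝ p (m + t • (m - p)) := by
  refine ⟨t / (1 + t), 1 / (1 + t), by positivity, by positivity, by field_simp; ring, ?_⟩
  match_scalars <;> field_simp; ring

variable {E : Type*} [AddCommGroup E] [TopologicalSpace E]

lemma IsExtreme.disjoint_interior [Module ℝ E] [ContinuousAdd E] [ContinuousSMul ℝ E]
    {A F : Set E} (hF : IsExtreme ℝ A F) (hFA : F ≠ A) : Disjoint F (interior A) := by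
  rw [Set.disjoint_left]
  intro m hmF hmA
  obtain ⟨p, hpA, hpF⟩ : ∃ p ∈ A, p ∉ F := not_subset.1 fun h => hFA (hF.1.antisymm h)
  have hray : Tendsto (fun t : ℝ => m + t • (m - p)) (𝓝 0) (𝓝 m) := by
    simpa using tendsto_const_nhds.add ((tendsto_id (x := 𝓝 (0 : ℝ))).smul_const (m - p))
  have hnear : ∀ᶠ t in 𝓝[>] (0 : ℝ), m + t • (m - p) ∈ A :=
    nhdsWithin_le_nhds <| hray.eventually (mem_interior_iff_mem_nhds.1 hmA)
  obtain ⟨t, htA, ht⟩ := (hnear.and self_mem_nhdsWithin).exists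
  exact hpF (hF.2 hpA htA hmF (mem_openSegment_add_smul_sub p m ht))

lemma neg_mem_interior_of_eq_neg [IsTopologicalAddGroup E] {P : Set E} (hsym : P = -P) {y : E}
    (hy : y ∈ interior P) : -y ∈ interior P := by
  rw [hsym]
  change -y ∈ interior ((Homeomorph.neg E) ⁻¹' P)
  rw [← Homeomorph.preimage_interior]
  simpa using hy

lemma Convex.midpoint_neg_mem_interior_of_inter_interior_translates [Module ℝ E]
    [IsTopologicalAddGroup E] [ContinuousConstSMul ℝ E] {P : Set E} (hP : Convex ℝ P)
    (hsym : P = -P) {u v : E}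
    (hmeet : (interior ((· + u) '' P) ∩ interior ((· + v) '' P)).Nonempty) :
    midpoint ℝ u (-v) ∈ interior P := by
  obtain ⟨x, hxu, hxv⟩ := hmeet
  rw [← Homeomorph.coe_addRight, ← Homeomorph.image_interior] at hxu hxv
  obtain ⟨y, hy, rfl⟩ := hxu
  obtain ⟨z, hz, hzy⟩ := hxv
  have hsame : midpoint ℝ u (-v) = midpoint ℝ z (-y) := by
    rw [midpoint_eq_midpoint_iff_vsub_eq_vsub, vsub_eq_sub, vsub_eq_sub]
    simp only [Homeomorph.coe_addRight] at hzy
    linear_combination (norm := abel) -hzy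
  rw [hsame]
  exact hP.interior.segment_subset hz (neg_mem_interior_of_eq_neg hsym hy)
    (midpoint_mem_segment z (-y))

theorem stmt0_general {d : ℕ} (P : Set (Fin d → ℝ))
    (hpoly : IsPolytope P) (hsym : P = -P)
    (u v : Fin d → ℝ)
    (hmeet : (interior ((· + u) '' P) ∩ interior ((· + v) '' P)).Nonempty) :
    midpoint ℝ u (-v) ∈ interior P ∧
      (u ≠ -v → segment ℝ u (-v) ≠ P → ¬ IsProperFace P (segment ℝ u (-v))) := by
  have hconv : Convex ℝ P := by
    obtain ⟨V, rfl⟩ := hpoly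
    exact convex_convexHull ℝ _
  have hmid := hconv.midpoint_neg_mem_interior_of_inter_interior_translates hsym hmeet
  refine ⟨hmid, fun _ _ ⟨_, hne, hexp⟩ => ?_⟩
  exact Set.disjoint_left.1 (hexp.isExtreme.disjoint_interior hne)
    (midpoint_mem_segment u (-v)) hmid

theorem stmt0 {d : ℕ} (P : Set (Fin d → ℝ))
    (hpoly : IsPolytope P) (hsym : P = -P) (hint : (interior P).Nonempty)
    (u v : Fin d → ℝ)
    (hu : u ∈ P.extremePoints ℝ) (hv : v ∈ P.extremePoints ℝ)
    (hmv : -v ∈ P.extremePoints ℝ)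
    (hmeet : (interior ((· + u) '' P) ∩ interior ((· + v) '' P)).Nonempty) :
    midpoint ℝ u (-v) ∈ interior P ∧
      (u ≠ -v → segment ℝ u (-v) ≠ P → ¬ IsProperFace P (segment ℝ u (-v))) :=
  stmt0_general P hpoly hsym u v hmeet
end

section
/- Let d and k be integers with 3 ≤ k ≤ d/2, and let P ⊂ ℝ^d be a centrally symmetric d-polytope with N vertices (N ≥ 2d). Then the number of (k−1)-dimensional faces of P satisfies f_{k−1}(P) ≤ (1 − 2^{−d}) · (N/(N−1)) · C(N,k). -/
open Set

/-- The number of `j`-dimensional proper faces of `P`. -/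
noncomputable def faceCount {d : ℕ} (P : Set (Fin d → ℝ)) (j : ℕ) : ℕ :=
  Set.ncard {F : Set (Fin d → ℝ) |
    IsProperFace P F ∧ Module.finrank ℝ (affineSpan ℝ F).direction = j}

/-!
Let `V` be the set of the `N` vertices of `P`. For `u ∈ V` the half-size copy
`Q u = ½ • (u +ᵥ P)` lies in `P` and has volume `2⁻ᵈ · vol P`. If `Q u` and `Q v` overlap in
positive volume, a common interior point gives `½ • (u - v) ∈ interior P`; this is the midpoint
of `u` and the vertex `-v`, so `{u, -v}` lies in no proper face. Cauchy–Schwarz for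
`∑ u, 𝟙 (Q u)` yields `N² ≤ 2ᵈ (N + #{(u, v) | u ≠ v, ½ • (u - v) ∈ interior P})`, so at most
`(1 - 2⁻ᵈ) N² / 2` pairs of vertices are cofacial.

A `(k - 1)`-face is spanned by `k` affinely independent vertices, and is recovered from their
affine span, so `f_{k-1}` is at most the number of cofacial `k`-sets of vertices. Every pair
inside a cofacial `k`-set is cofacial, and a pair lies in at most `C(N - 2, k - 2)` such sets;
double counting and `C(N, k) C(k, 2) = C(N, 2) C(N - 2, k - 2)` finish the proof.
-/

open Finset MeasureTheory Module
open scoped ENNReal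

namespace Finset

variable {α : Type*} [DecidableEq α]

theorem card_mul_choose_le_card_mul_choose {V : Finset α} {𝒜 ℬ : Finset (Finset α)}
    {k j : ℕ} (h𝒜 : 𝒜 ⊆ V.powersetCard k) (hℬ : ℬ ⊆ V.powersetCard j)
    (h𝒜ℬ : ∀ S ∈ 𝒜, S.powersetCard j ⊆ ℬ) :
    #𝒜 * k.choose j ≤ #ℬ * (#V - j).choose (k - j) := by
  refine card_mul_le_card_mul (fun S p => p ⊆ S) (fun S hS => ?_) (fun p hp => ?_)
  · calc k.choose j = #(S.powersetCard j) := by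
          rw [card_powersetCard, (mem_powersetCard.1 (h𝒜 hS)).2]
      _ ≤ #(ℬ.bipartiteAbove (fun S p => p ⊆ S) S) :=
          card_le_card fun p hpS => mem_filter.2 ⟨h𝒜ℬ S hS hpS, (mem_powersetCard.1 hpS).1⟩
  · obtain ⟨hpV, hpj⟩ := mem_powersetCard.1 (hℬ hp)
    calc #(𝒜.bipartiteBelow (fun S p => p ⊆ S) p) ≤ #((V \ p).powersetCard (k - j)) := by
          refine card_le_card_of_injOn (· \ p) (fun S hS => ?_) (fun S hS T hT hST => ?_)
          · obtain ⟨hS𝒜, hpS⟩ := mem_filter.1 hS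
            obtain ⟨hSV, hSk⟩ := mem_powersetCard.1 (h𝒜 hS𝒜)
            exact mem_powersetCard.2 ⟨sdiff_subset_sdiff hSV le_rfl,
              by rw [card_sdiff_of_subset hpS, hSk, hpj]⟩
          · rw [← sdiff_union_of_subset (mem_filter.1 hS).2,
              ← sdiff_union_of_subset (mem_filter.1 hT).2]
            exact congrArg (· ∪ p) hST
      _ = (#V - j).choose (k - j) := by rw [card_powersetCard, card_sdiff_of_subset hpV, hpj]

theorem card_filter_offDiag_le (s : Finset α) (Q : Finset α → Prop) [DecidablePred Q] :
    #(s.offDiag.filter fun p => Q {p.1, p.2}) ≤ 2 * #((s.powersetCard 2).filter Q) := by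
  set T := s.offDiag.filter fun p => Q {p.1, p.2}
  have himage : T.image (fun p => ({p.1, p.2} : Finset α)) ⊆ (s.powersetCard 2).filter Q := by
    simp only [subset_iff, mem_image, mem_filter, mem_offDiag, mem_powersetCard, T]
    rintro _ ⟨p, ⟨⟨hp₁, hp₂, hne⟩, hQ⟩, rfl⟩
    exact ⟨⟨insert_subset hp₁ (singleton_subset_iff.2 hp₂), card_pair hne⟩, hQ⟩
  refine (card_le_mul_card_image T 2 fun S hS => ?_).trans
    (Nat.mul_le_mul_left 2 (card_le_card himage))
  obtain ⟨p₀, hp₀, rfl⟩ := mem_image.1 hS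
  calc #(T.filter fun p => ({p.1, p.2} : Finset α) = {p₀.1, p₀.2})
      ≤ #({p₀.1, p₀.2} : Finset α) := by
        refine card_le_card_of_injOn Prod.fst (fun p hp => ?_) (fun p hp q hq hpq => ?_)
        · rw [← (mem_filter.1 hp).2]; exact mem_insert_self _ _
        · simp only [mem_coe, mem_filter, mem_offDiag, T] at hp hq
          have h₂ : p.2 ∈ ({q.1, q.2} : Finset α) := by
            rw [hq.2, ← hp.2]; exact mem_insert_of_mem (mem_singleton_self _)
          rcases mem_insert.1 h₂ with h | h
          · exact absurd (hpq.trans h.symm) hp.1.1.2.2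
          · exact Prod.ext hpq (mem_singleton.1 h)
    _ = 2 := card_pair (mem_offDiag.1 (mem_filter.1 hp₀).1).2.2

end Finset

theorem ENNReal.two_mul_le_add_sq (a b : ℝ≥0∞) : 2 * a * b ≤ a ^ 2 + b ^ 2 := by
  rcases eq_or_ne a ⊤ with rfl | ha
  · simp
  rcases eq_or_ne b ⊤ with rfl | hb
  · simp
  lift a to NNReal using ha
  lift b to NNReal using hb
  exact_mod_cast _root_.two_mul_le_add_sq a b

theorem MeasureTheory.sq_sum_measure_le_measure_mul_sum_inter {α ι : Type*}
    [MeasurableSpace α] (μ : Measure α) {P : Set α} (hP : MeasurableSet P) (hPfin : μ P ≠ ∞)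
    {Q : ι → Set α} (hQ : ∀ i, MeasurableSet (Q i)) (s : Finset ι) (hQP : ∀ i ∈ s, Q i ⊆ P) :
    (∑ i ∈ s, μ (Q i)) ^ 2 ≤ μ P * ∑ i ∈ s, ∑ j ∈ s, μ (Q i ∩ Q j) := by
  set m : α → ℝ≥0∞ := fun x => ∑ i ∈ s, (Q i).indicator 1 x
  have hm : Measurable m := Finset.measurable_sum _ fun i _ => measurable_one.indicator (hQ i)
  set S := ∑ i ∈ s, μ (Q i)
  have hint_m : ∫⁻ x, m x ∂μ = S := by
    rw [lintegral_finsetSum _ fun i _ => measurable_one.indicator (hQ i)]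
    exact sum_congr rfl fun i _ => lintegral_indicator_one (hQ i)
  have hint_sq : ∫⁻ x, m x ^ 2 ∂μ = ∑ i ∈ s, ∑ j ∈ s, μ (Q i ∩ Q j) := by
    have hsq : ∀ x, m x ^ 2 = ∑ i ∈ s, ∑ j ∈ s, (Q i ∩ Q j).indicator 1 x := fun x => by
      simp only [m, sq, sum_mul_sum, Set.inter_indicator_one, Pi.mul_apply]
    simp_rw [hsq]
    rw [lintegral_finsetSum _ fun i _ => Finset.measurable_sum _ fun j _ =>
      measurable_one.indicator ((hQ i).inter (hQ j))]
    refine sum_congr rfl fun i _ => ?_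
    rw [lintegral_finsetSum _ fun j _ => measurable_one.indicator ((hQ i).inter (hQ j))]
    exact sum_congr rfl fun j _ => lintegral_indicator_one ((hQ i).inter (hQ j))
  rcases eq_or_ne (μ P) 0 with hP0 | hP0
  · simp [show S = 0 from sum_eq_zero fun i hi => measure_mono_null (hQP i hi) hP0]
  -- Cauchy–Schwarz for `𝟙 P` and `m`: integrate AM-GM pointwise, then cancel `S ^ 2 * μ P`
  have hpoint : ∀ x, 2 * S * (μ P * m x) ≤ S ^ 2 * P.indicator 1 x + (μ P * m x) ^ 2 := by
    intro x
    by_cases hx : x ∈ P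
    · simpa [hx] using ENNReal.two_mul_le_add_sq S (μ P * m x)
    · have : m x = 0 := sum_eq_zero fun i hi =>
        Set.indicator_of_notMem (fun hxi => hx (hQP i hi hxi)) 1
      simp [this]
  have hint := lintegral_mono (μ := μ) hpoint
  rw [lintegral_const_mul _ (hm.const_mul _), lintegral_const_mul _ hm, hint_m,
    lintegral_add_left ((measurable_one.indicator hP).const_mul _),
    lintegral_const_mul _ (measurable_one.indicator hP), lintegral_indicator_one hP,
    lintegral_congr fun x => mul_pow (μ P) (m x) 2, lintegral_const_mul _ (hm.pow_const 2),
    hint_sq] at hint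
  have hSfin : S ≠ ∞ := ENNReal.sum_ne_top.2 fun i hi =>
    ne_top_of_le_ne_top hPfin (measure_mono (hQP i hi))
  have hfin : S ^ 2 * μ P ≠ ∞ := ENNReal.mul_ne_top (ENNReal.pow_ne_top hSfin) hPfin
  have : S ^ 2 * μ P + S ^ 2 * μ P ≤
      S ^ 2 * μ P + μ P * (∑ i ∈ s, ∑ j ∈ s, μ (Q i ∩ Q j)) * μ P := by
    convert hint using 1 <;> ring
  rw [← ENNReal.mul_le_mul_iff_left hP0 hPfin]
  exact (ENNReal.add_le_add_iff_left hfin).1 this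

theorem neg_mem_extremePoints_of_eq_neg {E : Type*} [AddCommGroup E] [Module ℝ E] {P : Set E}
    (hsym : P = -P) {x : E} (hx : x ∈ P.extremePoints ℝ) : -x ∈ P.extremePoints ℝ := by
  have := image_extremePoints (LinearEquiv.neg ℝ : E ≃ₗ[ℝ] E) P
  have hneg : ∀ S : Set E, (LinearEquiv.neg ℝ : E ≃ₗ[ℝ] E) '' S = -S := fun _ =>
    Set.image_neg_eq_neg
  rw [hneg, hneg, ← hsym] at this
  exact this ▸ Set.neg_mem_neg.2 hx

section TopologicalVectorSpace

variable {E : Type*} [AddCommGroup E] [Module ℝ E] [TopologicalSpace E]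

open Filter AffineMap in
theorem IsExtreme.eq_of_mem_interior [IsTopologicalAddGroup E] [ContinuousSMul ℝ E]
    {A F : Set E} (hF : IsExtreme ℝ A F) {x : E} (hxF : x ∈ F) (hxA : x ∈ interior A) :
    F = A := by
  refine hF.1.antisymm fun p hp => ?_
  obtain ⟨δ, hδA, hδ : 1 < δ⟩ := ((eventually_homothety_mem_of_mem_interior ℝ p hxA).filter_mono
    (nhdsWithin_le_nhds (s := Ioi 1))).and self_mem_nhdsWithin |>.exists
  have hδ₀ : 0 < δ := one_pos.trans hδ
  have hseg : x ∈ openSegment ℝ p (homothety p δ x) := by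
    refine ⟨1 - δ⁻¹, δ⁻¹, sub_pos.2 (inv_lt_one_of_one_lt₀ hδ), inv_pos.2 hδ₀, by ring, ?_⟩
    rw [homothety_apply, vsub_eq_sub, vadd_eq_add, smul_add, smul_smul, inv_mul_cancel₀ hδ₀.ne']
    module
  exact hF.left_mem_of_mem_openSegment hp hδA hxF hseg

theorem IsExposed.eq_inter_affineSpan {A F : Set E} (hF : IsExposed ℝ A F) :
    F = A ∩ affineSpan ℝ F := by
  refine (subset_inter hF.subset (subset_affineSpan ℝ F)).antisymm fun x ⟨hxA, hxF⟩ => ?_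
  obtain ⟨x₀, hx₀⟩ := (affineSpan_nonempty ℝ).1 ⟨x, hxF⟩
  obtain ⟨l, rfl⟩ := hF ⟨x₀, hx₀⟩
  have himage : l '' {x ∈ A | ∀ y ∈ A, l y ≤ l x} = {l x₀} :=
    eq_singleton_iff_unique_mem.2 ⟨mem_image_of_mem l hx₀, fun _ ⟨z, hz, hzx⟩ =>
      hzx ▸ le_antisymm (hx₀.2 z hz.1) (hz.2 x₀ hx₀.1)⟩
  have hlx : l x = l x₀ := by
    have := AffineSubspace.mem_map_of_mem l.toLinearMap.toAffineMap hxF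
    rwa [AffineSubspace.map_span, LinearMap.coe_toAffineMap, ContinuousLinearMap.coe_coe, himage,
      AffineSubspace.mem_affineSpan_singleton] at this
  exact ⟨hxA, fun y hy => hlx ▸ hx₀.2 y hy⟩

def IsCofacial (P : Set E) (S : Finset E) : Prop :=
  ∃ F, IsProperFace P F ∧ ↑S ⊆ F

theorem IsCofacial.mono {P : Set E} {S T : Finset E} (hS : IsCofacial P S) (hTS : T ⊆ S) :
    IsCofacial P T :=
  let ⟨F, hF, hSF⟩ := hS
  ⟨F, hF, (coe_subset.2 hTS).trans hSF⟩

open Classical in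
theorem powersetCard_subset_filter_isCofacial {P : Set E} {V S : Finset E} {k : ℕ} (j : ℕ)
    (hS : S ∈ (V.powersetCard k).filter (IsCofacial P)) :
    S.powersetCard j ⊆ (V.powersetCard j).filter (IsCofacial P) := fun _ hT =>
  mem_filter.2 ⟨powersetCard_mono (mem_powersetCard.1 (mem_filter.1 hS).1).1 hT,
    (mem_filter.1 hS).2.mono (mem_powersetCard.1 hT).1⟩

theorem IsProperFace.half_add_notMem_interior [IsTopologicalAddGroup E] [ContinuousSMul ℝ E]
    {P F : Set E} (hconv : Convex ℝ P) (hF : IsProperFace P F) {u v : E} (hu : u ∈ F)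
    (hv : v ∈ F) : (2⁻¹ : ℝ) • u + (2⁻¹ : ℝ) • v ∉ interior P := fun hint =>
  hF.2.1 (hF.2.2.isExtreme.eq_of_mem_interior
    (hF.2.2.convex hconv hu hv (by norm_num) (by norm_num) (by norm_num)) hint)

end TopologicalVectorSpace

section NormedSpace

variable {E : Type*} [NormedAddCommGroup E] [NormedSpace ℝ E]

theorem IsExposed.exists_affineIndependent_extremePoints {P F : Set E} (hcomp : IsCompact P)
    (hconv : Convex ℝ P) (hfin : (P.extremePoints ℝ).Finite) (hF : IsExposed ℝ P F)
    (hFne : F.Nonempty) :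
    ∃ S : Finset E, ↑S ⊆ P.extremePoints ℝ ∩ F ∧
      #S = finrank ℝ (affineSpan ℝ F).direction + 1 ∧
      affineSpan ℝ (S : Set E) = affineSpan ℝ F := by
  have hext : F.extremePoints ℝ ⊆ P.extremePoints ℝ ∩ F := fun x hx =>
    ⟨hF.isExtreme.extremePoints_subset_extremePoints hx, hx.1⟩
  have hextfin := hfin.subset (hext.trans inter_subset_left)
  have hspan : affineSpan ℝ (F.extremePoints ℝ) = affineSpan ℝ F := by
    rw [← affineSpan_convexHull, ← (hextfin.isClosed_convexHull ℝ).closure_eq,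
      closure_convexHull_extremePoints
        (hcomp.of_isClosed_subset (hF.isClosed hcomp.isClosed) hF.subset) (hF.convex hconv)]
  obtain ⟨t, hts, htspan, hind⟩ := exists_affineIndependent ℝ E (F.extremePoints ℝ)
  have := (hextfin.subset hts).fintype
  have : Nonempty t := ((affineSpan_nonempty ℝ).1
    (htspan.trans hspan ▸ (affineSpan_nonempty ℝ).2 hFne)).to_subtype
  refine ⟨t.toFinset, by simpa using hts.trans hext, ?_, by simpa [htspan]⟩
  rw [toFinset_card, ← hind.finrank_vectorSpan_add_one, Subtype.range_coe, ← direction_affineSpan,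
    htspan, hspan]

open Classical in
theorem card_filter_offDiag_half_sub_mem_interior_le [Nontrivial E] {P : Set E} {V : Finset E}
    (hconv : Convex ℝ P) (hsym : P = -P) (hV : ↑V = P.extremePoints ℝ) :
    #(V.offDiag.filter fun p => (2⁻¹ : ℝ) • (p.1 - p.2) ∈ interior P) ≤
      2 * #((V.powersetCard 2).filter fun S => ¬ IsCofacial P S) := by
  have hVext : ∀ {x}, x ∈ V ↔ x ∈ P.extremePoints ℝ := by rw [← hV]; exact Iff.rfl
  refine (card_le_card_of_injOn (fun p => (p.1, -p.2)) (fun p hp => ?_)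
    (fun p _ q _ hpq => ?_)).trans (card_filter_offDiag_le V fun S => ¬ IsCofacial P S)
  · simp only [mem_coe, mem_filter, Finset.mem_offDiag] at hp
    obtain ⟨⟨hu, hv, -⟩, hint⟩ := hp
    have hhalf : (2⁻¹ : ℝ) • (p.1 - p.2) = (2⁻¹ : ℝ) • p.1 + (2⁻¹ : ℝ) • -p.2 := by module
    refine mem_filter.2 ⟨Finset.mem_offDiag.2 ⟨hu,
      hVext.2 (neg_mem_extremePoints_of_eq_neg hsym (hVext.1 hv)), fun h => ?_⟩,
      fun ⟨F, hF, hsub⟩ => ?_⟩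
    · refine (disjoint_interior_extremePoints P).notMem_of_mem_left ?_ (hVext.1 hu)
      rwa [hhalf, ← show p.1 = -p.2 from h, ← add_smul, show (2⁻¹ + 2⁻¹ : ℝ) = 1 by norm_num,
        one_smul] at hint
    · rw [coe_pair] at hsub
      exact hF.half_add_notMem_interior hconv (hsub (by simp)) (hsub (by simp)) (hhalf ▸ hint)
  · exact Prod.ext (Prod.ext_iff.1 hpq).1 (neg_injective (Prod.ext_iff.1 hpq).2)

section FiniteDimensional

open scoped Pointwise

variable [FiniteDimensional ℝ E]

section Measure

variable [MeasurableSpace E] [BorelSpace E] (μ : Measure E) [μ.IsAddHaarMeasure]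

theorem Convex.addHaar_eq_zero_of_interior_eq_empty {s : Set E} (hs : Convex ℝ s)
    (hcl : IsClosed s) (hint : interior s = ∅) : μ s = 0 :=
  measure_mono_null (by rw [frontier, hcl.closure_eq, hint, Set.sdiff_empty])
    (hs.addHaar_frontier μ)

theorem addHaar_half_smul_vadd (P : Set E) (u : E) :
    μ ((2⁻¹ : ℝ) • (u +ᵥ P)) = (2 ^ finrank ℝ E)⁻¹ * μ P := by
  rw [Measure.addHaar_smul, measure_vadd, abs_pow, abs_inv, abs_two,
    ENNReal.ofReal_pow (by norm_num), ENNReal.ofReal_inv_of_pos two_pos, ENNReal.ofReal_ofNat,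
    ← ENNReal.inv_pow]

theorem addHaar_inter_half_smul_vadd_eq_zero {P : Set E} (hconv : Convex ℝ P)
    (hcl : IsClosed P) (hsym : P = -P) {u v : E} (huv : (2⁻¹ : ℝ) • (u - v) ∉ interior P) :
    μ ((2⁻¹ : ℝ) • (u +ᵥ P) ∩ (2⁻¹ : ℝ) • (v +ᵥ P)) = 0 := by
  have h2 : (2⁻¹ : ℝ) ≠ 0 := by norm_num
  refine Convex.addHaar_eq_zero_of_interior_eq_empty μ
    (((hconv.vadd u).smul _).inter ((hconv.vadd v).smul _))
    (((hcl.vadd u).smul_of_ne_zero h2).inter ((hcl.vadd v).smul_of_ne_zero h2)) ?_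
  refine Set.eq_empty_iff_forall_notMem.2 fun z hz => huv ?_
  rw [interior_inter, interior_smul₀ h2, interior_smul₀ h2, interior_vadd, interior_vadd] at hz
  obtain ⟨⟨_, ⟨x, hx, rfl⟩, rfl⟩, ⟨_, ⟨y, hy, rfl⟩, hyx⟩⟩ := hz
  have hnegx : -x ∈ interior P := interior_maximal
    ((Set.neg_subset_neg.2 interior_subset).trans hsym.superset) isOpen_interior.neg
    (Set.neg_mem_neg.2 hx)
  have : (2⁻¹ : ℝ) • (u - v) = (2⁻¹ : ℝ) • y + (2⁻¹ : ℝ) • -x := by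
    simp only [vadd_eq_add, smul_add] at hyx
    rw [smul_sub, smul_neg, ← sub_eq_add_neg, sub_eq_sub_iff_add_eq_add, ← hyx, add_comm]
  exact this ▸ hconv.interior hy hnegx (by norm_num) (by norm_num) (by norm_num)

open Classical in
theorem sum_addHaar_inter_half_smul_vadd_le {P : Set E} (hcomp : IsCompact P)
    (hconv : Convex ℝ P) (hsym : P = -P) (V : Finset E) :
    ∑ u ∈ V, ∑ v ∈ V, μ ((2⁻¹ : ℝ) • (u +ᵥ P) ∩ (2⁻¹ : ℝ) • (v +ᵥ P)) ≤
      #((V ×ˢ V).filter fun p => (2⁻¹ : ℝ) • (p.1 - p.2) ∈ interior P) *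
        ((2 ^ finrank ℝ E)⁻¹ * μ P) := by
  rw [← sum_product']
  calc _ ≤ ∑ p ∈ V ×ˢ V,
        if (2⁻¹ : ℝ) • (p.1 - p.2) ∈ interior P then (2 ^ finrank ℝ E)⁻¹ * μ P else 0 :=
        sum_le_sum fun p _ => by
          split_ifs with h
          · exact (measure_mono Set.inter_subset_left).trans (addHaar_half_smul_vadd μ P p.1).le
          · exact (addHaar_inter_half_smul_vadd_eq_zero μ hconv hcomp.isClosed hsym h).le
    _ = _ := by rw [sum_ite, sum_const_zero, add_zero, sum_const, nsmul_eq_mul]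

end Measure

open Classical in
theorem card_sq_le_two_pow_finrank_mul {P : Set E} (hcomp : IsCompact P) (hconv : Convex ℝ P)
    (hsym : P = -P) (hint : (interior P).Nonempty) (V : Finset E) (hVP : ↑V ⊆ P) :
    #V ^ 2 ≤ 2 ^ finrank ℝ E *
      (#V + #(V.offDiag.filter fun p => (2⁻¹ : ℝ) • (p.1 - p.2) ∈ interior P)) := by
  borelize E
  set μ := Measure.addHaar (G := E)
  set T := (V ×ˢ V).filter fun p => (2⁻¹ : ℝ) • (p.1 - p.2) ∈ interior P with hT
  set c : ℝ≥0∞ := (2 ^ finrank ℝ E)⁻¹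
  have hQP : ∀ u ∈ V, (2⁻¹ : ℝ) • (u +ᵥ P) ⊆ P := by
    rintro u hu _ ⟨_, ⟨x, hx, rfl⟩, rfl⟩
    simpa only [vadd_eq_add, smul_add] using
      hconv (hVP hu) hx (by norm_num) (by norm_num) (by norm_num)
  have hPpos : μ P ≠ 0 :=
    ((isOpen_interior.measure_pos μ hint).trans_le (measure_mono interior_subset)).ne'
  have hPfin : μ P ≠ ∞ := hcomp.measure_lt_top.ne
  have key := (sq_sum_measure_le_measure_mul_sum_inter μ hcomp.isClosed.measurableSet hPfin
    (fun u => ((hcomp.vadd u).smul _).isClosed.measurableSet) V hQP).trans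
    (mul_le_mul_right (sum_addHaar_inter_half_smul_vadd_le μ hcomp hconv hsym V) _)
  rw [sum_congr rfl fun u _ => addHaar_half_smul_vadd μ P u, sum_const, nsmul_eq_mul] at key
  have hc : c * μ P ^ 2 ≠ 0 := mul_ne_zero (ENNReal.inv_ne_zero.2 (by simp)) (pow_ne_zero _ hPpos)
  have hc' : c * μ P ^ 2 ≠ ∞ := ENNReal.mul_ne_top (by simp [c]) (ENNReal.pow_ne_top hPfin)
  have hVT : ((#V ^ 2 : ℕ) : ℝ≥0∞) * c ≤ #T := by
    rw [← ENNReal.mul_le_mul_iff_left hc hc']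
    calc ((#V ^ 2 : ℕ) : ℝ≥0∞) * c * (c * μ P ^ 2) = (#V * (c * μ P)) ^ 2 := by push_cast; ring
      _ ≤ μ P * (#T * (c * μ P)) := key
      _ = #T * (c * μ P ^ 2) := by ring
  rw [← div_eq_mul_inv, ENNReal.div_le_iff (by simp) (by simp)] at hVT
  have hTcard : #T ≤ #V + #(V.offDiag.filter fun p => (2⁻¹ : ℝ) • (p.1 - p.2) ∈ interior P) := by
    rw [hT, ← diag_union_offDiag, filter_union]
    exact (Finset.card_union_le _ _).trans
      (Nat.add_le_add_right ((card_filter_le _ _).trans_eq (diag_card V)) _)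
  calc #V ^ 2 ≤ #T * 2 ^ finrank ℝ E := by exact_mod_cast hVT
    _ ≤ _ := by rw [mul_comm]; gcongr

end FiniteDimensional

end NormedSpace

section Polytope

variable {d : ℕ} {P : Set (Fin d → ℝ)} {V : Finset (Fin d → ℝ)}

open Classical in
theorem faceCount_le_card_cofacial (hcomp : IsCompact P) (hconv : Convex ℝ P)
    (hV : ↑V = P.extremePoints ℝ) (j : ℕ) :
    faceCount P j ≤ #((V.powersetCard (j + 1)).filter (IsCofacial P)) := by
  have hfin : (P.extremePoints ℝ).Finite := hV ▸ V.finite_toSet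
  choose! S hSsub hScard hSspan using fun F (hF : IsProperFace P F) =>
    hF.2.2.exists_affineIndependent_extremePoints hcomp hconv hfin hF.1
  refine (Set.ncard_le_ncard_of_injOn S (fun F hF => ?_) (fun F hF G hG hFG => ?_)
    (finite_toSet _)).trans_eq (Set.ncard_coe_finset _)
  · refine mem_filter.2 ⟨mem_powersetCard.2 ⟨?_, by rw [hScard F hF.1, hF.2]⟩,
      F, hF.1, (hSsub F hF.1).trans inter_subset_right⟩
    exact coe_subset.1 (hV ▸ (hSsub F hF.1).trans inter_subset_left)
  · rw [hF.1.2.2.eq_inter_affineSpan, hG.1.2.2.eq_inter_affineSpan, ← hSspan F hF.1,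
      ← hSspan G hG.1, hFG]

open Classical in
theorem card_cofacial_pairs_le [Nonempty (Fin d)] (hcomp : IsCompact P) (hconv : Convex ℝ P)
    (hsym : P = -P) (hfull : affineSpan ℝ P = ⊤) (hV : ↑V = P.extremePoints ℝ) :
    (#((V.powersetCard 2).filter (IsCofacial P)) : ℝ) ≤ (1 - 2 ^ (-(d : ℤ))) * #V ^ 2 / 2 := by
  set b := #((V.powersetCard 2).filter (IsCofacial P))
  set c := #((V.powersetCard 2).filter fun S => ¬ IsCofacial P S)
  have hvol := card_sq_le_two_pow_finrank_mul hcomp hconv hsym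
    (hconv.interior_nonempty_iff_affineSpan_eq_top.2 hfull) V (hV ▸ extremePoints_subset)
  rw [finrank_fin_fun] at hvol
  have hvol' : (#V : ℝ) ^ 2 ≤ 2 ^ d * (#V + 2 * c) := by
    exact_mod_cast hvol.trans (Nat.mul_le_mul_left _ (Nat.add_le_add_left
      (card_filter_offDiag_half_sub_mem_interior_le hconv hsym hV) _))
  have hsplit : (b : ℝ) + c = #V * (#V - 1) / 2 := by
    rw [← Nat.cast_choose_two, ← card_powersetCard]
    exact_mod_cast card_filter_add_card_filter_not (IsCofacial P)
  have := (inv_mul_le_iff₀ (by positivity : (0 : ℝ) < 2 ^ d)).2 hvol'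
  rw [zpow_neg, zpow_natCast]
  linarith

end Polytope

theorem le_mul_div_mul_choose_of_mul_choose_le {f b N k : ℕ} {θ : ℝ} (hk : 2 ≤ k)
    (hN : 2 ≤ N) (hcount : f * k.choose 2 ≤ b * (N - 2).choose (k - 2))
    (hb : (b : ℝ) ≤ θ * N ^ 2 / 2) : (f : ℝ) ≤ θ * (N / (N - 1)) * N.choose k := by
  have hid : (N.choose k : ℝ) * k.choose 2 = N * (N - 1) / 2 * (N - 2).choose (k - 2) := by
    rw [← Nat.cast_choose_two]; exact_mod_cast Nat.choose_mul hk
  have hN : (1 : ℝ) < N := by exact_mod_cast hN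
  rw [← mul_le_mul_iff_left₀ (by exact_mod_cast Nat.choose_pos hk : (0 : ℝ) < k.choose 2)]
  calc (f : ℝ) * k.choose 2 ≤ b * (N - 2).choose (k - 2) := by exact_mod_cast hcount
    _ ≤ θ * N ^ 2 / 2 * (N - 2).choose (k - 2) := by gcongr
    _ = θ * (N / (N - 1)) * N.choose k * k.choose 2 := by
      rw [mul_assoc _ (N.choose k : ℝ), hid]
      field_simp [(by linarith : (N : ℝ) - 1 ≠ 0)]

theorem stmt7 {d k N : ℕ} (hk : 3 ≤ k) (hkd : 2 * k ≤ d)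
    (P : Set (Fin d → ℝ))
    (hpoly : IsPolytope P) (hsym : P = -P) (hfull : affineSpan ℝ P = ⊤)
    (hN : (P.extremePoints ℝ).ncard = N) (hNd : 2 * d ≤ N) :
    (faceCount P (k - 1) : ℝ) ≤
      (1 - 2 ^ (-(d : ℤ))) * ((N : ℝ) / ((N : ℝ) - 1)) * (N.choose k) := by
  classical
  obtain ⟨V₀, hV₀⟩ := hpoly
  have hconv : Convex ℝ P := hV₀ ▸ convex_convexHull ℝ _
  have hcomp : IsCompact P := hV₀ ▸ V₀.finite_toSet.isCompact_convexHull (𝕜 := ℝ)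
  have hfin : (P.extremePoints ℝ).Finite :=
    V₀.finite_toSet.subset (hV₀ ▸ extremePoints_convexHull_subset)
  set V := hfin.toFinset
  have hV : ↑V = P.extremePoints ℝ := hfin.coe_toFinset
  have hVcard : #V = N := by rw [← hN, Set.ncard_eq_toFinset_card _ hfin]
  have : Nonempty (Fin d) := ⟨⟨0, by omega⟩⟩
  have hface := faceCount_le_card_cofacial hcomp hconv hV (k - 1)
  rw [Nat.sub_add_cancel (by omega)] at hface
  have hcount := card_mul_choose_le_card_mul_choose (filter_subset _ _) (filter_subset _ _)
    fun _ hS => powersetCard_subset_filter_isCofacial (P := P) (V := V) (k := k) 2 hS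
  have hpairs := card_cofacial_pairs_le hcomp hconv hsym hfull hV
  rw [hVcard] at hcount hpairs
  exact (Nat.cast_le.2 hface).trans
    (le_mul_div_mul_choose_of_mul_choose_le (by omega) (by omega) hcount hpairs)
end

section
/- Let d ≥ 2 and let Q = conv(±e_1, ±e_2, …, ±e_d, ±(e_1 + e_2 + ⋯ + e_d)) ⊂ ℝ^d, where e_1, …, e_d is the standard basis. Then Q is a centrally symmetric d-polytope with exactly 2(d+1) vertices, and Q is ⌊d/2⌋-neighborly: for every set S of ⌊d/2⌋ vertices of Q containing no pair of antipodal vertices {v, −v}, there is a face F of Q whose vertex set (set of extreme points of F) is exactly S. -/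
open Set

/-- The `i`-th standard basis vector of `ℝ^d`. -/
def stdBasis (d : ℕ) (i : Fin d) : Fin d → ℝ := fun j => if j = i then 1 else 0

/-- The point set `{±e_1, …, ±e_d, ±(e_1 + ⋯ + e_d)}`. -/
def QVerts (d : ℕ) : Set (Fin d → ℝ) :=
  (⋃ i : Fin d, {stdBasis d i, -stdBasis d i}) ∪
    {fun _ => (1 : ℝ), fun _ => (-1 : ℝ)}

namespace Stmt9

variable {d : ℕ}

noncomputable def lin (c : Fin d → ℝ) : (Fin d → ℝ) →L[ℝ] ℝ :=
  LinearMap.toContinuousLinearMap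
    { toFun := fun x => ∑ i, c i * x i
      map_add' := by intro x y; simp [mul_add, Finset.sum_add_distrib]
      map_smul' := by
        intro r x
        simp only [Pi.smul_apply, smul_eq_mul, RingHom.id_apply, Finset.mul_sum]
        exact Finset.sum_congr rfl fun i _ => by ring }

lemma lin_apply (c x : Fin d → ℝ) : lin c x = ∑ i, c i * x i := rfl

lemma lin_stdBasis (c : Fin d → ℝ) (i : Fin d) : lin c (stdBasis d i) = c i := by
  simp [lin_apply, stdBasis, mul_ite]

lemma lin_one (c : Fin d → ℝ) : lin c (fun _ => (1:ℝ)) = ∑ i, c i := by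
  simp [lin_apply]

lemma lin_negOne (c : Fin d → ℝ) : lin c (fun _ => (-1:ℝ)) = -∑ i, c i := by
  have h : ((fun _ => (-1:ℝ)) : Fin d → ℝ) = -(fun _ => (1:ℝ)) := by funext j; simp
  rw [h, map_neg, lin_one]

lemma negOne_eq : ((fun _ => (-1:ℝ)) : Fin d → ℝ) = -(fun _ => (1:ℝ)) := by
  funext j; simp

lemma mem_QVerts {v : Fin d → ℝ} : v ∈ QVerts d ↔
    (∃ i, v = stdBasis d i ∨ v = -stdBasis d i) ∨
      (v = fun _ => (1:ℝ)) ∨ (v = fun _ => (-1:ℝ)) := by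
  simp only [QVerts, Set.mem_union, Set.mem_iUnion, Set.mem_insert_iff,
    Set.mem_singleton_iff]

lemma QVerts_finite : (QVerts d).Finite := by
  apply Set.Finite.union
  · exact Set.finite_iUnion fun i => (Set.finite_singleton _).insert _
  · exact (Set.finite_singleton _).insert _

lemma neg_mem_QVerts {v : Fin d → ℝ} (hv : v ∈ QVerts d) : -v ∈ QVerts d := by
  rcases mem_QVerts.1 hv with (⟨i, h | h⟩ | h | h) <;> subst h <;> apply mem_QVerts.2
  · exact Or.inl ⟨i, Or.inr rfl⟩
  · exact Or.inl ⟨i, Or.inl (neg_neg _)⟩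
  · right; right; rw [negOne_eq]
  · right; left; rw [negOne_eq, neg_neg]

lemma stdBasis_injective : Function.Injective (stdBasis d) := by
  intro i j h
  by_contra hne
  have := congrFun h i
  simp only [stdBasis, if_pos rfl] at this
  rw [if_neg hne] at this
  norm_num at this

lemma stdBasis_ne_neg (i j : Fin d) : stdBasis d i ≠ -stdBasis d j := by
  intro h
  have := congrFun h i
  simp only [stdBasis, if_pos rfl, Pi.neg_apply] at this
  rcases eq_or_ne i j with rfl | hne
  · rw [if_pos rfl] at this; norm_num at this
  · rw [if_neg hne] at this; norm_num at this

lemma stdBasis_ne_one (hd : 2 ≤ d) (i : Fin d) :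
    stdBasis d i ≠ (fun _ => (1:ℝ)) := by
  have : Nontrivial (Fin d) := Fin.nontrivial_iff_two_le.mpr hd
  obtain ⟨j, hj⟩ := exists_ne i
  intro h
  have := congrFun h j
  simp [stdBasis, hj] at this

lemma stdBasis_ne_negOne (hd : 2 ≤ d) (i : Fin d) :
    stdBasis d i ≠ (fun _ => (-1:ℝ)) := by
  have : Nontrivial (Fin d) := Fin.nontrivial_iff_two_le.mpr hd
  obtain ⟨j, hj⟩ := exists_ne i
  intro h
  have := congrFun h j
  simp [stdBasis, hj] at this

lemma neg_stdBasis_ne_one (hd : 2 ≤ d) (i : Fin d) :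
    -stdBasis d i ≠ (fun _ => (1:ℝ)) := by
  have : Nontrivial (Fin d) := Fin.nontrivial_iff_two_le.mpr hd
  obtain ⟨j, hj⟩ := exists_ne i
  intro h
  have := congrFun h j
  simp [stdBasis, hj] at this

lemma neg_stdBasis_ne_negOne (hd : 2 ≤ d) (i : Fin d) :
    -stdBasis d i ≠ (fun _ => (-1:ℝ)) := by
  have : Nontrivial (Fin d) := Fin.nontrivial_iff_two_le.mpr hd
  obtain ⟨j, hj⟩ := exists_ne i
  intro h
  have := congrFun h j
  simp [stdBasis, hj] at this

lemma one_ne_negOne (hd : 2 ≤ d) :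
    ((fun _ => (1:ℝ)) : Fin d → ℝ) ≠ (fun _ => (-1:ℝ)) := by
  intro h
  have := congrFun h ⟨0, by omega⟩
  norm_num at this

lemma ne_neg_self (hd : 2 ≤ d) {v : Fin d → ℝ} (hv : v ∈ QVerts d) : v ≠ -v := by
  have hd0 : 0 < d := by omega
  intro h
  rcases mem_QVerts.1 hv with (⟨i, h' | h'⟩ | h' | h') <;> subst h'
  · have := congrFun h i; simp [stdBasis] at this; norm_num at this
  · have := congrFun h i; simp [stdBasis] at this; norm_num at this
  · have := congrFun h ⟨0, hd0⟩; norm_num at this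
  · have := congrFun h ⟨0, hd0⟩; norm_num at this

lemma lin_le_on_hull {V : Set (Fin d → ℝ)} {c : Fin d → ℝ} {r : ℝ}
    (hV : ∀ v ∈ V, lin c v ≤ r) {x : Fin d → ℝ} (hx : x ∈ convexHull ℝ V) :
    lin c x ≤ r :=
  convexHull_min hV (convex_halfSpace_le (lin c).toLinearMap.isLinear r) hx

/-- The key face lemma. -/
lemma face_key {c : Fin d → ℝ} {S : Set (Fin d → ℝ)} (hS : S ⊆ QVerts d)
    (h1 : ∀ v ∈ S, lin c v = 1) (h2 : ∀ w ∈ QVerts d, w ∉ S → lin c w < 1)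
    (hne : S.Nonempty) :
    ∃ F : Set (Fin d → ℝ), IsProperFace (convexHull ℝ (QVerts d)) F ∧
      F = convexHull ℝ S ∧ S ⊆ F := by
  classical
  set P := convexHull ℝ (QVerts d) with hP
  set F : Set (Fin d → ℝ) := {x | x ∈ P ∧ ∀ y ∈ P, lin c y ≤ lin c x} with hFdef
  obtain ⟨v₀, hv₀⟩ := hne
  have hub : ∀ w ∈ QVerts d, lin c w ≤ 1 := by
    intro w hw
    by_cases h : w ∈ S
    · exact (h1 w h).le
    · exact (h2 w hw h).le
  have hle : ∀ x ∈ P, lin c x ≤ 1 := fun x hx => lin_le_on_hull hub hx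
  have hSF : S ⊆ F := by
    intro v hv
    refine ⟨subset_convexHull ℝ _ (hS hv), fun y hy => ?_⟩
    rw [h1 v hv]
    exact hle y hy
  have hexp : IsExposed ℝ P F := fun _ => ⟨lin c, rfl⟩
  have hmax : ∀ x ∈ F, lin c x = 1 := by
    intro x hx
    refine le_antisymm (hle x hx.1) ?_
    have := hx.2 v₀ (subset_convexHull ℝ _ (hS hv₀))
    rwa [h1 v₀ hv₀] at this
  have hfin : (QVerts d).Finite := QVerts_finite
  have hF : F = convexHull ℝ S := by
    apply Subset.antisymm
    · intro x hx
      have hx1 : lin c x = 1 := hmax x hx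
      have hxP : x ∈ convexHull ℝ (↑hfin.toFinset : Set (Fin d → ℝ)) := by
        rw [hfin.coe_toFinset]; exact hx.1
      rw [Finset.convexHull_eq] at hxP
      obtain ⟨w, hw0, hw1, hwx⟩ := hxP
      rw [Finset.centerMass_eq_of_sum_1 _ _ hw1] at hwx
      have hlinx : lin c x = ∑ y ∈ hfin.toFinset, w y * lin c y := by
        rw [← hwx, map_sum]
        exact Finset.sum_congr rfl fun y _ => by simp
      have hsum0 : ∑ y ∈ hfin.toFinset, w y * (1 - lin c y) = 0 := by
        have : ∑ y ∈ hfin.toFinset, w y * (1 - lin c y)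
            = (∑ y ∈ hfin.toFinset, w y) - ∑ y ∈ hfin.toFinset, w y * lin c y := by
          rw [← Finset.sum_sub_distrib]
          exact Finset.sum_congr rfl fun y _ => by ring
        rw [this, hw1, ← hlinx, hx1, sub_self]
      have hzero : ∀ y ∈ hfin.toFinset, y ∉ S → w y = 0 := by
        intro y hy hyS
        have hterm := (Finset.sum_eq_zero_iff_of_nonneg (fun y hy =>
          mul_nonneg (hw0 y hy) (by
            have := hub y (hfin.mem_toFinset.1 hy); linarith))).1 hsum0 y hy
        have hlt := h2 y (hfin.mem_toFinset.1 hy) hyS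
        rcases mul_eq_zero.1 hterm with h | h
        · exact h
        · linarith
      set t' := hfin.toFinset.filter (· ∈ S) with ht'
      have hterm0 : ∀ y ∈ hfin.toFinset, (fun y => w y • y) y ≠ 0 → y ∈ S := by
        intro y hy hne'
        by_contra hnot
        exact hne' (by simp [hzero y hy hnot])
      have hwx' : ∑ i ∈ hfin.toFinset, w i • i = x := by simpa using hwx
      have hx' : x = ∑ y ∈ t', w y • y := by
        rw [← hwx', ht', Finset.sum_filter_of_ne hterm0]
      have hterm1 : ∀ y ∈ hfin.toFinset, w y ≠ 0 → y ∈ S := by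
        intro y hy hne'
        by_contra hnot
        exact hne' (hzero y hy hnot)
      have hw1' : ∑ y ∈ t', w y = 1 := by
        rw [ht', Finset.sum_filter_of_ne hterm1, hw1]
      have hmem := Finset.centerMass_mem_convexHull (s := S) t'
        (fun i hi => hw0 i (Finset.mem_of_mem_filter _ hi))
        (by rw [hw1']; norm_num) (z := id)
        (fun i hi => (Finset.mem_filter.1 hi).2)
      rw [Finset.centerMass_eq_of_sum_1 _ _ hw1'] at hmem
      rw [hx']
      simpa using hmem
    · exact convexHull_min hSF (hexp.convex (convex_convexHull ℝ _))
  refine ⟨F, ⟨⟨v₀, hSF hv₀⟩, ?_, hexp⟩, hF, hSF⟩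
  intro hFeq
  have hnv : -v₀ ∈ P := subset_convexHull ℝ _ (neg_mem_QVerts (hS hv₀))
  have hnvF : -v₀ ∈ F := hFeq ▸ hnv
  have h1' := hmax _ hnvF
  rw [map_neg, h1 v₀ hv₀] at h1'
  norm_num at h1'

/-- Existence of the separating functional. -/
lemma exists_functional (hd : 2 ≤ d) {S : Set (Fin d → ℝ)} (hS : S ⊆ QVerts d)
    (hanti : ∀ v ∈ S, -v ∉ S) (hcard : 2 * S.ncard ≤ d) :
    ∃ c : Fin d → ℝ, (∀ v ∈ S, lin c v = 1) ∧ (∀ w ∈ QVerts d, w ∉ S → lin c w < 1) := by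
  classical
  have hSfin : S.Finite := QVerts_finite.subset hS
  have hnontriv : Nontrivial (Fin d) := Fin.nontrivial_iff_two_le.mpr hd
  set n : ℕ := S.ncard with hn
  set ε : Fin d → ℝ := fun i =>
    if stdBasis d i ∈ S then 1 else if -stdBasis d i ∈ S then -1 else 0 with hε
  set η : ℝ :=
    if (fun _ => (1:ℝ)) ∈ S then 1 else if (fun _ => (-1:ℝ)) ∈ S then -1 else 0 with hη
  set A : Finset (Fin d) := Finset.univ.filter (fun i => ε i ≠ 0) with hA
  set a : ℕ := A.card with ha
  set σ : ℝ := ∑ i ∈ A, ε i with hσ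
  set D : ℝ := (d : ℝ) - a + (if η = 0 then 1 else 0) with hD
  set t : ℝ := (η - σ) / D with ht
  set c : Fin d → ℝ := fun i => if ε i ≠ 0 then ε i else t with hc
  have hεcases : ∀ i, ε i = 1 ∨ ε i = -1 ∨ ε i = 0 := by
    intro i
    simp only [hε]
    split
    · exact Or.inl rfl
    · split
      · exact Or.inr (Or.inl rfl)
      · exact Or.inr (Or.inr rfl)
  have hηcases : η = 0 ∨ η = 1 ∨ η = -1 := by
    simp only [hη]
    split
    · exact Or.inr (Or.inl rfl)
    · split
      · exact Or.inr (Or.inr rfl)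
      · exact Or.inl rfl
  have hσa : |σ| ≤ (a:ℝ) := by
    calc |σ| ≤ ∑ i ∈ A, |ε i| := by rw [hσ]; exact Finset.abs_sum_le_sum_abs _ _
    _ = ∑ _i ∈ A, (1:ℝ) := by
        refine Finset.sum_congr rfl fun i hi => ?_
        have hne : ε i ≠ 0 := by
          have h' := hi; rw [hA] at h'; exact (Finset.mem_filter.1 h').2
        rcases hεcases i with h | h | h
        · simp [h]
        · simp [h]
        · exact absurd h hne
    _ = (a:ℝ) := by simp [ha]
  -- the designated vertices
  set f : Fin d → (Fin d → ℝ) := fun i => if ε i = 1 then stdBasis d i else -stdBasis d i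
    with hf
  have hfval : ∀ i j, j ≠ i → f i j = 0 := by
    intro i j hne
    simp only [hf]
    split <;> simp [stdBasis, hne]
  have hfself : ∀ i, f i i = 1 ∨ f i i = -1 := by
    intro i
    simp only [hf]
    split
    · exact Or.inl (by simp [stdBasis])
    · exact Or.inr (by simp [stdBasis])
  have hfinj : ∀ i j, f i = f j → i = j := by
    intro i j h
    by_contra hne
    have hci := congrFun h i
    rw [hfval j i hne] at hci
    rcases hfself i with h1 | h1 <;> rw [h1] at hci <;> norm_num at hci
  set T : Finset (Fin d → ℝ) := A.image f with hT
  have hTcard : T.card = a := by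
    rw [hT, Finset.card_image_of_injOn fun x _ y _ h => hfinj x y h, ha]
  have hTsub : (↑T : Set (Fin d → ℝ)) ⊆ S := by
    intro x hx
    obtain ⟨i, hi, rfl⟩ := Finset.mem_image.1 (by exact_mod_cast hx)
    have hiA : ε i ≠ 0 := by
      have h' := hi; rw [hA] at h'; exact (Finset.mem_filter.1 h').2
    by_cases hone : stdBasis d i ∈ S
    · have hε1 : ε i = 1 := by simp only [hε]; rw [if_pos hone]
      have : f i = stdBasis d i := by simp only [hf]; rw [if_pos hε1]
      rw [this]; exact hone
    · by_cases hneg : -stdBasis d i ∈ S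
      · have hε1 : ε i = -1 := by simp only [hε]; rw [if_neg hone, if_pos hneg]
        have : f i = -stdBasis d i := by
          simp only [hf]; rw [if_neg (by rw [hε1]; norm_num)]
        rw [this]; exact hneg
      · exact absurd (by simp only [hε]; rw [if_neg hone, if_neg hneg]) hiA
  have hconst_notT : ∀ r : ℝ, r ≠ 0 → (fun _ => r) ∉ T := by
    intro r hr hmem
    obtain ⟨i, hi, hfi⟩ := Finset.mem_image.1 hmem
    obtain ⟨j, hj⟩ := exists_ne i
    have h0 := hfval i j hj
    rw [hfi] at h0
    exact hr h0
  have hcardkey : a + (if η = 0 then 0 else 1) ≤ n := by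
    have hTle : T.card ≤ n := by
      have := Set.ncard_le_ncard hTsub hSfin
      rwa [Set.ncard_coe_finset, ← hn] at this
    by_cases h0 : η = 0
    · simp only [if_pos h0, add_zero]
      omega
    · have hu : ∃ u, u ∈ S ∧ u ∉ T := by
        by_cases hone : (fun _ => (1:ℝ)) ∈ S
        · exact ⟨_, hone, hconst_notT 1 one_ne_zero⟩
        · have hneg : (fun _ => (-1:ℝ)) ∈ S := by
            by_contra hneg
            exact h0 (by simp only [hη]; rw [if_neg hone, if_neg hneg])
          exact ⟨_, hneg, hconst_notT (-1) (by norm_num)⟩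
      obtain ⟨u, huS, huT⟩ := hu
      have hins : (insert u T).card = a + 1 := by
        rw [Finset.card_insert_of_notMem huT, hTcard]
      have hsub : ↑(insert u T) ⊆ S := by
        rw [Finset.coe_insert]
        exact Set.insert_subset huS hTsub
      have hle := Set.ncard_le_ncard hsub hSfin
      rw [Set.ncard_coe_finset, hins, ← hn] at hle
      simp only [if_neg h0]
      omega
  have han : (a:ℝ) ≤ (n:ℝ) := by
    have : a ≤ n := le_trans (Nat.le_add_right a _) hcardkey
    exact_mod_cast this
  have hdn : 2 * (n:ℝ) ≤ (d:ℝ) := by exact_mod_cast hcard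
  have hDge : (n:ℝ) + 1 ≤ D := by
    by_cases h0 : η = 0
    · rw [hD, if_pos h0]
      linarith
    · have han1 : (a:ℝ) + 1 ≤ (n:ℝ) := by
        have : a + 1 ≤ n := by
          have := hcardkey
          rw [if_neg h0] at this
          omega
        exact_mod_cast this
      rw [hD, if_neg h0]
      linarith
  have hDpos : (0:ℝ) < D := lt_of_lt_of_le (by positivity) hDge
  have habs_ησ : |η - σ| ≤ (n:ℝ) := by
    by_cases h0 : η = 0
    · rw [h0, zero_sub, abs_neg]
      linarith
    · have han1 : (a:ℝ) + 1 ≤ (n:ℝ) := by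
        have : a + 1 ≤ n := by
          have := hcardkey
          rw [if_neg h0] at this
          omega
        exact_mod_cast this
      have hη1 : |η| ≤ 1 := by
        rcases hηcases with h | h | h
        · exact absurd h h0
        · simp [h]
        · simp [h]
      calc |η - σ| = |η + -σ| := by rw [sub_eq_add_neg]
      _ ≤ |η| + |-σ| := abs_add_le _ _
      _ = |η| + |σ| := by rw [abs_neg]
      _ ≤ 1 + (a:ℝ) := add_le_add hη1 hσa
      _ ≤ (n:ℝ) := by linarith
  have habs_t : |t| < 1 := by
    rw [ht, abs_div, abs_of_pos hDpos, div_lt_one hDpos]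
    linarith
  obtain ⟨htm1, ht1⟩ := abs_lt.1 habs_t
  have hale_d : a ≤ d := by
    have : A.card ≤ d := by
      simpa using Finset.card_le_univ A
    omega
  have hAcompl : (Finset.univ.filter (fun i => ¬ ε i ≠ 0)).card = d - a := by
    have h := Finset.card_filter_add_card_filter_not
      (s := (Finset.univ : Finset (Fin d))) (p := fun i => ε i ≠ 0)
    simp only [Finset.card_univ, Fintype.card_fin] at h
    rw [← hA] at h
    omega
  have hsum : ∑ i, c i = σ + ((d:ℝ) - a) * t := by
    rw [← Finset.sum_filter_add_sum_filter_not Finset.univ (fun i => ε i ≠ 0) c]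
    have e1 : ∑ i ∈ Finset.univ.filter (fun i => ε i ≠ 0), c i = σ := by
      rw [hσ]
      refine Finset.sum_congr hA.symm fun i hi => ?_
      have hne : ε i ≠ 0 := (Finset.mem_filter.1 hi).2
      simp only [hc]
      rw [if_pos hne]
    have e2 : ∑ i ∈ Finset.univ.filter (fun i => ¬ ε i ≠ 0), c i = ((d:ℝ) - a) * t := by
      have hct : ∀ i ∈ Finset.univ.filter (fun i => ¬ ε i ≠ 0), c i = t := by
        intro i hi
        have hne := (Finset.mem_filter.1 hi).2
        simp only [hc]
        rw [if_neg hne]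
      rw [Finset.sum_congr rfl hct, Finset.sum_const, hAcompl, nsmul_eq_mul,
        Nat.cast_sub hale_d]
    rw [e1, e2]
  have hsum_eta : η ≠ 0 → ∑ i, c i = η := by
    intro h0
    have hDd : D = (d:ℝ) - a := by rw [hD, if_neg h0, add_zero]
    rw [hsum, ← hDd, ht, mul_div_cancel₀ _ (ne_of_gt hDpos)]
    ring
  have hsum_zero : η = 0 → ∑ i, c i = σ / D := by
    intro h0
    have hDd : (d:ℝ) - a = D - 1 := by rw [hD, if_pos h0]; ring
    rw [hsum, hDd, ht, h0]
    field_simp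
    ring
  have habs_sum : η = 0 → |∑ i, c i| < 1 := by
    intro h0
    rw [hsum_zero h0, abs_div, abs_of_pos hDpos, div_lt_one hDpos]
    linarith
  have hcA : ∀ i, ε i ≠ 0 → c i = ε i := by
    intro i h
    simp only [hc]
    rw [if_pos h]
  have hct0 : ∀ i, ε i = 0 → c i = t := by
    intro i h
    simp only [hc]
    rw [if_neg (by rw [h]; simp)]
  refine ⟨c, ?_, ?_⟩
  · intro v hv
    rcases mem_QVerts.1 (hS hv) with (⟨i, h | h⟩ | h | h) <;> subst h
    · have hε1 : ε i = 1 := by simp only [hε]; rw [if_pos hv]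
      rw [lin_stdBasis, hcA i (by rw [hε1]; norm_num), hε1]
    · have h' := hanti _ hv
      rw [neg_neg] at h'
      have hε1 : ε i = -1 := by simp only [hε]; rw [if_neg h', if_pos hv]
      rw [map_neg, lin_stdBasis, hcA i (by rw [hε1]; norm_num), hε1]
      norm_num
    · have hη1 : η = 1 := by simp only [hη]; rw [if_pos hv]
      rw [lin_one, hsum_eta (by rw [hη1]; norm_num), hη1]
    · have h' := hanti _ hv
      rw [negOne_eq, neg_neg] at h'
      have hη1 : η = -1 := by simp only [hη]; rw [if_neg h', if_pos hv]
      rw [lin_negOne, hsum_eta (by rw [hη1]; norm_num), hη1]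
      norm_num
  · intro w hw hwS
    rcases mem_QVerts.1 hw with (⟨i, h | h⟩ | h | h) <;> subst h
    · rw [lin_stdBasis]
      by_cases h' : -stdBasis d i ∈ S
      · have hε1 : ε i = -1 := by simp only [hε]; rw [if_neg hwS, if_pos h']
        rw [hcA i (by rw [hε1]; norm_num), hε1]
        norm_num
      · have hε1 : ε i = 0 := by simp only [hε]; rw [if_neg hwS, if_neg h']
        rw [hct0 i hε1]
        exact ht1
    · rw [map_neg, lin_stdBasis]
      by_cases h' : stdBasis d i ∈ S
      · have hε1 : ε i = 1 := by simp only [hε]; rw [if_pos h']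
        rw [hcA i (by rw [hε1]; norm_num), hε1]
        norm_num
      · have h'' : -stdBasis d i ∉ S := hwS
        have hε1 : ε i = 0 := by simp only [hε]; rw [if_neg h', if_neg h'']
        rw [hct0 i hε1]
        linarith
    · rw [lin_one]
      by_cases h' : (fun _ => (-1:ℝ)) ∈ S
      · have hη1 : η = -1 := by simp only [hη]; rw [if_neg hwS, if_pos h']
        rw [hsum_eta (by rw [hη1]; norm_num), hη1]
        norm_num
      · have hη0 : η = 0 := by simp only [hη]; rw [if_neg hwS, if_neg h']
        have := abs_lt.1 (habs_sum hη0)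
        linarith [this.2]
    · rw [lin_negOne]
      by_cases h' : (fun _ => (1:ℝ)) ∈ S
      · have hη1 : η = 1 := by simp only [hη]; rw [if_pos h']
        rw [hsum_eta (by rw [hη1]; norm_num), hη1]
        norm_num
      · have hη0 : η = 0 := by simp only [hη]; rw [if_neg h', if_neg hwS]
        have := abs_lt.1 (habs_sum hη0)
        linarith [this.1]

lemma verts_extreme (hd : 2 ≤ d) :
    QVerts d ⊆ (convexHull ℝ (QVerts d)).extremePoints ℝ := by
  intro v hv
  have hvv : v ≠ -v := ne_neg_self hd hv
  have hsingle : ({v} : Set (Fin d → ℝ)) ⊆ QVerts d := by simpa using hv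
  have hanti : ∀ u ∈ ({v} : Set (Fin d → ℝ)), -u ∉ ({v} : Set (Fin d → ℝ)) := by
    intro u hu
    simp only [Set.mem_singleton_iff] at hu ⊢
    subst hu
    intro h
    exact hvv h.symm
  have hcard : 2 * ({v} : Set (Fin d → ℝ)).ncard ≤ d := by
    rw [Set.ncard_singleton]; omega
  obtain ⟨c, h1, h2⟩ := exists_functional hd hsingle hanti hcard
  obtain ⟨F, hproper, hF, hSF⟩ := face_key hsingle h1 h2 ⟨v, rfl⟩
  rw [convexHull_singleton] at hF
  have hext : IsExtreme ℝ (convexHull ℝ (QVerts d)) {v} := hF ▸ hproper.2.2.isExtreme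
  exact isExtreme_singleton.mp hext

lemma extremePoints_eq (hd : 2 ≤ d) :
    (convexHull ℝ (QVerts d)).extremePoints ℝ = QVerts d :=
  Subset.antisymm extremePoints_convexHull_subset (verts_extreme hd)

lemma QVerts_ncard (hd : 2 ≤ d) : (QVerts d).ncard = 2 * (d + 1) := by
  classical
  set g : Fin d × Bool → (Fin d → ℝ) :=
    fun p => if p.2 then stdBasis d p.1 else -stdBasis d p.1 with hg
  have hB : (⋃ i : Fin d, {stdBasis d i, -stdBasis d i}) = Set.range g := by
    ext x
    simp only [Set.mem_iUnion, Set.mem_insert_iff, Set.mem_singleton_iff,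
      Set.mem_range, hg]
    constructor
    · rintro ⟨i, h | h⟩
      · exact ⟨(i, true), by simp [h]⟩
      · exact ⟨(i, false), by simp [h]⟩
    · rintro ⟨⟨i, b⟩, h⟩
      cases b
      · exact ⟨i, Or.inr (by simpa using h.symm)⟩
      · exact ⟨i, Or.inl (by simpa using h.symm)⟩
  have hginj : Function.Injective g := by
    rintro ⟨i, b⟩ ⟨j, b'⟩ h
    simp only [hg] at h
    cases b <;> cases b' <;> simp only [if_true, if_false, Bool.false_eq_true] at h
    · rw [Prod.mk.injEq]
      exact ⟨stdBasis_injective (neg_injective h), rfl⟩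
    · exact absurd h.symm (stdBasis_ne_neg j i)
    · exact absurd h (stdBasis_ne_neg i j)
    · rw [Prod.mk.injEq]
      exact ⟨stdBasis_injective h, rfl⟩
  have hBcard : (⋃ i : Fin d, ({stdBasis d i, -stdBasis d i} : Set (Fin d → ℝ))).ncard
      = 2 * d := by
    rw [hB, ← Set.image_univ, Set.ncard_image_of_injective _ hginj, Set.ncard_univ]
    simp [Nat.card_eq_fintype_card]
    ring
  have hCcard : ({fun _ => (1:ℝ), fun _ => (-1:ℝ)} : Set (Fin d → ℝ)).ncard = 2 :=
    Set.ncard_pair (one_ne_negOne hd)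
  have hdisj : Disjoint (⋃ i : Fin d, ({stdBasis d i, -stdBasis d i} : Set (Fin d → ℝ)))
      ({fun _ => (1:ℝ), fun _ => (-1:ℝ)} : Set (Fin d → ℝ)) := by
    rw [Set.disjoint_left]
    intro x hx hx'
    simp only [Set.mem_iUnion, Set.mem_insert_iff, Set.mem_singleton_iff] at hx hx'
    obtain ⟨i, h | h⟩ := hx <;> subst h <;> rcases hx' with h' | h'
    · exact stdBasis_ne_one hd i h'
    · exact stdBasis_ne_negOne hd i h'
    · exact neg_stdBasis_ne_one hd i h'
    · exact neg_stdBasis_ne_negOne hd i h'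
  rw [QVerts, Set.ncard_union_eq hdisj
    (Set.finite_iUnion fun i => (Set.finite_singleton _).insert _)
    ((Set.finite_singleton _).insert _), hBcard, hCcard]
  ring

end Stmt9

open Stmt9 in
theorem stmt9 (d : ℕ) (hd : 2 ≤ d) :
    IsPolytope (convexHull ℝ (QVerts d)) ∧
    convexHull ℝ (QVerts d) = -convexHull ℝ (QVerts d) ∧
    affineSpan ℝ (convexHull ℝ (QVerts d)) = ⊤ ∧
    ((convexHull ℝ (QVerts d)).extremePoints ℝ).ncard = 2 * (d + 1) ∧
    (∀ S : Set (Fin d → ℝ), S ⊆ (convexHull ℝ (QVerts d)).extremePoints ℝ →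
      S.ncard = d / 2 → (∀ v ∈ S, -v ∉ S) →
        ∃ F : Set (Fin d → ℝ), IsProperFace (convexHull ℝ (QVerts d)) F ∧
          F.extremePoints ℝ = S) := by
  have hfin : (QVerts d).Finite := QVerts_finite
  refine ⟨⟨hfin.toFinset, by rw [hfin.coe_toFinset]⟩, ?_, ?_, ?_, ?_⟩
  · -- central symmetry
    have hneg : -QVerts d = QVerts d := by
      apply Subset.antisymm
      · intro x hx
        rw [Set.mem_neg] at hx
        simpa using neg_mem_QVerts hx
      · intro x hx
        rw [Set.mem_neg]
        exact neg_mem_QVerts hx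
    rw [← convexHull_neg, hneg]
  · -- affine span
    rw [affineSpan_convexHull]
    have hone : ((fun _ => (1:ℝ)) : Fin d → ℝ) ∈ QVerts d := by
      apply mem_QVerts.2; right; left; rfl
    rw [AffineSubspace.affineSpan_eq_top_iff_vectorSpan_eq_top_of_nonempty ℝ (Fin d → ℝ) (Fin d → ℝ)
      ⟨_, hone⟩]
    have hbasis : ∀ i : Fin d, stdBasis d i ∈ vectorSpan ℝ (QVerts d) := by
      intro i
      have hei : stdBasis d i ∈ QVerts d := by
        apply mem_QVerts.2; left; exact ⟨i, Or.inl rfl⟩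
      have hnei : -stdBasis d i ∈ QVerts d := neg_mem_QVerts hei
      have h2 : stdBasis d i -ᵥ (-stdBasis d i) ∈ vectorSpan ℝ (QVerts d) :=
        vsub_mem_vectorSpan ℝ hei hnei
      have : stdBasis d i = (1/2 : ℝ) • (stdBasis d i -ᵥ (-stdBasis d i)) := by
        simp [vsub_eq_sub]
        module
      rw [this]
      exact Submodule.smul_mem _ _ h2
    rw [eq_top_iff, ← (Pi.basisFun ℝ (Fin d)).span_eq, Submodule.span_le]
    rintro x ⟨i, rfl⟩
    have : (Pi.basisFun ℝ (Fin d)) i = stdBasis d i := by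
      funext j
      simp [stdBasis, Pi.basisFun_apply, Pi.single_apply]
    rw [this]
    exact hbasis i
  · rw [extremePoints_eq hd]
    exact QVerts_ncard hd
  · intro S hSsub hScard hanti
    have hSQ : S ⊆ QVerts d := hSsub.trans (by rw [extremePoints_eq hd])
    have hc : 2 * S.ncard ≤ d := by omega
    have hne : S.Nonempty := Set.nonempty_of_ncard_ne_zero (by omega)
    obtain ⟨c, h1, h2⟩ := exists_functional hd hSQ hanti hc
    obtain ⟨F, hproper, hF, hSF⟩ := face_key hSQ h1 h2 hne
    refine ⟨F, hproper, ?_⟩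
    have hFP : F ⊆ convexHull ℝ (QVerts d) := by
      rw [hF]; exact convexHull_mono hSQ
    apply Subset.antisymm
    · rw [hF]; exact extremePoints_convexHull_subset
    · intro v hv
      have hvext := hSsub hv
      rw [mem_extremePoints] at hvext ⊢
      exact ⟨hSF hv, fun x₁ hx₁ x₂ hx₂ hseg => hvext.2 x₁ (hFP hx₁) x₂ (hFP hx₂) hseg⟩
end

section
/- Let Δ be an Eulerian simplicial complex of dimension d−1. Then its h-numbers satisfy the Dehn–Sommerville relations h_i(Δ) = h_{d−i}(Δ) for all 0 ≤ i ≤ d. -/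
open Finset

/-- The number of faces of `Δ` with `c` vertices (i.e. of dimension `c - 1`);
`fnum Δ 0 = 1` when `∅ ∈ Δ`, corresponding to `f_{-1} = 1`. -/
def fnum {V : Type*} (Δ : Finset (Finset V)) (c : ℕ) : ℕ :=
  (Δ.filter fun F => F.card = c).card

/-- The link of a face `F` in `Δ`: all faces `G` with `F ∩ G = ∅` and `F ∪ G ∈ Δ`. -/
def lk {V : Type*} [DecidableEq V] (Δ : Finset (Finset V)) (F : Finset V) :
    Finset (Finset V) :=
  Δ.filter fun G => Disjoint F G ∧ F ∪ G ∈ Δ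

/-- The `h`-numbers of a `(d-1)`-dimensional complex:
`h_i = ∑_{j=0}^{i} (-1)^{i-j} C(d-j, i-j) f_{j-1}`. -/
def hnum {V : Type*} (d : ℕ) (Δ : Finset (Finset V)) (i : ℕ) : ℤ :=
  ∑ j ∈ Finset.range (i + 1),
    (-1 : ℤ) ^ (i - j) * ((d - j).choose (i - j)) * (fnum Δ j : ℤ)

/-- `(-1)^a` only depends on the parity of `a`. -/
lemma negpow_congr (a b : ℕ) (h : a % 2 = b % 2) : (-1:ℤ)^a = (-1)^b := by
  conv_lhs => rw [← Nat.div_add_mod a 2]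
  conv_rhs => rw [← Nat.div_add_mod b 2]
  rw [pow_add, pow_add, pow_mul, pow_mul]
  norm_num [h]

/-- Counting faces of the link by cardinality equals counting containing faces. -/
lemma lk_count {V : Type*} [DecidableEq V] (Δ : Finset (Finset V))
    (hdown : ∀ F ∈ Δ, ∀ G, G ⊆ F → G ∈ Δ) (F : Finset V) (c : ℕ) :
    fnum (lk Δ F) c = (Δ.filter fun H => F ⊆ H ∧ H.card = F.card + c).card := by
  unfold fnum lk
  apply Finset.card_bij' (fun G _ => F ∪ G) (fun H _ => H \ F)
  · intro G hG
    simp only [mem_filter] at hG ⊢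
    obtain ⟨⟨hGΔ, hdisj, hunion⟩, hcard⟩ := hG
    exact ⟨hunion, subset_union_left, by rw [card_union_of_disjoint hdisj, hcard]⟩
  · intro H hH
    simp only [mem_filter] at hH ⊢
    obtain ⟨hHΔ, hFH, hcard⟩ := hH
    refine ⟨⟨hdown H hHΔ _ sdiff_subset, disjoint_sdiff, ?_⟩, ?_⟩
    · rwa [union_sdiff_of_subset hFH]
    · rw [card_sdiff_of_subset hFH]; omega
  · intro G hG
    simp only [mem_filter] at hG
    exact union_sdiff_cancel_left hG.1.2.1
  · intro H hH
    simp only [mem_filter] at hH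
    exact union_sdiff_of_subset hH.2.1

/-- Grouping a sum over faces by their cardinality. -/
lemma sum_by_card {V : Type*} (Δ : Finset (Finset V)) (d : ℕ)
    (hdim : ∀ H ∈ Δ, H.card ≤ d) (g : ℕ → ℤ) :
    ∑ H ∈ Δ, g H.card = ∑ c ∈ range (d+1), ((Δ.filter fun F => F.card = c).card : ℤ) * g c := by
  calc ∑ H ∈ Δ, g H.card
      = ∑ H ∈ Δ, ∑ c ∈ range (d+1), if H.card = c then g c else 0 := by
        apply Finset.sum_congr rfl
        intro H hH
        rw [Finset.sum_ite_eq (range (d+1)) H.card g]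
        simp [Nat.lt_succ_of_le (hdim H hH)]
    _ = ∑ c ∈ range (d+1), ∑ H ∈ Δ, if H.card = c then g c else 0 := Finset.sum_comm
    _ = ∑ c ∈ range (d+1), ((Δ.filter fun F => F.card = c).card : ℤ) * g c := by
        apply Finset.sum_congr rfl
        intro c _
        rw [Finset.sum_ite, Finset.sum_const_zero, add_zero, Finset.sum_const, nsmul_eq_mul]

/-- The Euler condition on the link of `F`, rewritten as an alternating sum over the
faces containing `F`. -/
lemma euler_H {V : Type*} [DecidableEq V] (d : ℕ) (Δ : Finset (Finset V))
    (hdown : ∀ F ∈ Δ, ∀ G, G ⊆ F → G ∈ Δ)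
    (hdimle : ∀ F ∈ Δ, F.card ≤ d)
    (heuler : ∀ F ∈ Δ,
      ∑ c ∈ Finset.range (d - F.card + 1), (-1 : ℤ) ^ c * (fnum (lk Δ F) c : ℤ) =
        (-1 : ℤ) ^ (d - F.card))
    (F : Finset V) (hF : F ∈ Δ) :
    ∑ H ∈ Δ.filter (fun H => F ⊆ H), (-1:ℤ)^(H.card - F.card) = (-1)^(d - F.card) := by
  have h1 := heuler F hF
  simp only [lk_count Δ hdown F] at h1
  rw [← h1]
  calc ∑ H ∈ Δ.filter (fun H => F ⊆ H), (-1:ℤ)^(H.card - F.card)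
      = ∑ H ∈ Δ, if F ⊆ H then (-1:ℤ)^(H.card - F.card) else 0 := by
        rw [Finset.sum_filter]
    _ = ∑ H ∈ Δ, ∑ c ∈ range (d - F.card + 1),
          if F ⊆ H ∧ H.card = F.card + c then (-1:ℤ)^c else 0 := by
        apply Finset.sum_congr rfl
        intro H hH
        by_cases hFH : F ⊆ H
        · have hle : F.card ≤ H.card := card_le_card hFH
          have hHd : H.card ≤ d := hdimle H hH
          have hiff : ∀ c, (F ⊆ H ∧ H.card = F.card + c) ↔ c = H.card - F.card := by
            intro c; constructor
            · rintro ⟨-, h⟩; omega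
            · rintro rfl; exact ⟨hFH, by omega⟩
          simp only [hiff]
          rw [Finset.sum_ite_eq' (range (d - F.card + 1)) (H.card - F.card) (fun c => (-1:ℤ)^c)]
          have : H.card - F.card ∈ range (d - F.card + 1) := by
            rw [mem_range]; omega
          simp [this, hFH]
        · simp only [hFH, if_false, false_and, Finset.sum_const_zero]
    _ = ∑ c ∈ range (d - F.card + 1), ∑ H ∈ Δ,
          if F ⊆ H ∧ H.card = F.card + c then (-1:ℤ)^c else 0 := Finset.sum_comm
    _ = ∑ c ∈ range (d - F.card + 1),
          (-1:ℤ)^c * ((Δ.filter fun H => F ⊆ H ∧ H.card = F.card + c).card : ℤ) := by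
        apply Finset.sum_congr rfl
        intro c _
        rw [Finset.sum_ite, Finset.sum_const_zero, add_zero, Finset.sum_const, nsmul_eq_mul,
          mul_comm]

/-- The Dehn–Sommerville relations for the `f`-numbers of an Eulerian complex. -/
lemma DS_f {V : Type*} [DecidableEq V] (d : ℕ) (Δ : Finset (Finset V))
    (hdown : ∀ F ∈ Δ, ∀ G, G ⊆ F → G ∈ Δ)
    (hdimle : ∀ F ∈ Δ, F.card ≤ d)
    (heulerH : ∀ F ∈ Δ,
      ∑ H ∈ Δ.filter (fun H => F ⊆ H), (-1:ℤ)^(H.card - F.card) = (-1)^(d - F.card))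
    (j : ℕ) (hj : j ≤ d) :
    ∑ c ∈ range (d+1), (-1:ℤ)^c * (c.choose j : ℤ) * (fnum Δ c : ℤ)
      = (-1:ℤ)^d * (fnum Δ j : ℤ) := by
  have hS1 : ∑ F ∈ Δ.filter (fun F => F.card = j),
      ∑ H ∈ Δ.filter (fun H => F ⊆ H), (-1:ℤ)^(H.card - j)
      = (-1:ℤ)^(d-j) * (fnum Δ j : ℤ) := by
    rw [Finset.sum_congr rfl (fun F hF => ?_), Finset.sum_const, nsmul_eq_mul]
    · rw [mul_comm]; rfl
    · simp only [mem_filter] at hF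
      have := heulerH F hF.1
      rw [hF.2] at this
      exact this
  have hS2 : ∑ F ∈ Δ.filter (fun F => F.card = j),
      ∑ H ∈ Δ.filter (fun H => F ⊆ H), (-1:ℤ)^(H.card - j)
      = ∑ c ∈ range (d+1), ((fnum Δ c : ℤ)) * ((-1:ℤ)^(c-j) * (c.choose j : ℤ)) := by
    calc ∑ F ∈ Δ.filter (fun F => F.card = j),
          ∑ H ∈ Δ.filter (fun H => F ⊆ H), (-1:ℤ)^(H.card - j)
        = ∑ F ∈ Δ.filter (fun F => F.card = j), ∑ H ∈ Δ,
            if F ⊆ H then (-1:ℤ)^(H.card - j) else 0 := by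
          apply Finset.sum_congr rfl
          intro F _
          rw [Finset.sum_filter]
      _ = ∑ H ∈ Δ, ∑ F ∈ Δ.filter (fun F => F.card = j),
            if F ⊆ H then (-1:ℤ)^(H.card - j) else 0 := Finset.sum_comm
      _ = ∑ H ∈ Δ, (-1:ℤ)^(H.card - j) * (H.card.choose j : ℤ) := by
          apply Finset.sum_congr rfl
          intro H hH
          rw [Finset.sum_ite, Finset.sum_const_zero, add_zero, Finset.sum_const, nsmul_eq_mul,
            mul_comm]
          congr 2
          have : (Δ.filter (fun F => F.card = j)).filter (fun F => F ⊆ H)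
              = H.powersetCard j := by
            ext F
            simp only [mem_filter, mem_powersetCard]
            constructor
            · rintro ⟨⟨-, h2⟩, h3⟩; exact ⟨h3, h2⟩
            · rintro ⟨h1, h2⟩; exact ⟨⟨hdown H hH F h1, h2⟩, h1⟩
          rw [this, Finset.card_powersetCard]
      _ = ∑ c ∈ range (d+1), ((fnum Δ c : ℤ)) * ((-1:ℤ)^(c-j) * (c.choose j : ℤ)) :=
          sum_by_card Δ d hdimle (fun c => (-1:ℤ)^(c-j) * (c.choose j : ℤ))
  have key : ∑ c ∈ range (d+1), ((fnum Δ c : ℤ)) * ((-1:ℤ)^(c-j) * (c.choose j : ℤ))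
      = (-1:ℤ)^(d-j) * (fnum Δ j : ℤ) := hS2 ▸ hS1
  calc ∑ c ∈ range (d+1), (-1:ℤ)^c * (c.choose j : ℤ) * (fnum Δ c : ℤ)
      = ∑ c ∈ range (d+1), (-1:ℤ)^j *
          ((fnum Δ c : ℤ) * ((-1:ℤ)^(c-j) * (c.choose j : ℤ))) := by
        apply Finset.sum_congr rfl
        intro c _
        by_cases hcj : j ≤ c
        · have h : (-1:ℤ)^j * (-1:ℤ)^(c-j) = (-1:ℤ)^c := by
            rw [← pow_add]; congr 1; omega
          calc (-1:ℤ)^c * (c.choose j : ℤ) * (fnum Δ c : ℤ)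
              = ((-1:ℤ)^j * (-1:ℤ)^(c-j)) * (c.choose j : ℤ) * (fnum Δ c : ℤ) := by rw [h]
            _ = (-1:ℤ)^j * ((fnum Δ c : ℤ) * ((-1:ℤ)^(c-j) * (c.choose j : ℤ))) := by ring
        · have : c.choose j = 0 := Nat.choose_eq_zero_of_lt (by omega)
          simp [this]
    _ = (-1:ℤ)^j * ∑ c ∈ range (d+1),
          ((fnum Δ c : ℤ)) * ((-1:ℤ)^(c-j) * (c.choose j : ℤ)) := by rw [Finset.mul_sum]
    _ = (-1:ℤ)^j * ((-1:ℤ)^(d-j) * (fnum Δ j : ℤ)) := by rw [key]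
    _ = (-1:ℤ)^d * (fnum Δ j : ℤ) := by
        have h : (-1:ℤ)^j * (-1:ℤ)^(d-j) = (-1:ℤ)^d := by
          rw [← pow_add]; congr 1; omega
        rw [← mul_assoc, h]

/-- A recursion for the alternating double-binomial sum. -/
lemma L_rec (i c d : ℕ) (hd : 1 ≤ d) :
    (∑ j ∈ range (d+1), (-1:ℤ)^j * ((c+1).choose j : ℤ) * ((d-j).choose i : ℤ))
    = (∑ j ∈ range (d+1), (-1:ℤ)^j * (c.choose j : ℤ) * ((d-j).choose i : ℤ))
      - (∑ j ∈ range (d-1+1), (-1:ℤ)^j * (c.choose j : ℤ) * ((d-1-j).choose i : ℤ)) := by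
  rw [Finset.sum_range_succ' (fun j => (-1:ℤ)^j * ((c+1).choose j : ℤ) * ((d-j).choose i : ℤ)) d,
    Finset.sum_range_succ' (fun j => (-1:ℤ)^j * (c.choose j : ℤ) * ((d-j).choose i : ℤ)) d]
  have hrange : d - 1 + 1 = d := by omega
  rw [hrange]
  have hterm : ∀ j ∈ range d,
      (-1:ℤ)^(j+1) * ((c+1).choose (j+1) : ℤ) * ((d-(j+1)).choose i : ℤ)
      = ((-1:ℤ)^(j+1) * (c.choose (j+1) : ℤ) * ((d-(j+1)).choose i : ℤ))
        - ((-1:ℤ)^j * (c.choose j : ℤ) * ((d-1-j).choose i : ℤ)) := by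
    intro j _
    have h1 : d - (j+1) = d - 1 - j := by omega
    rw [h1, Nat.choose_succ_succ, pow_succ]
    push_cast; ring
  rw [Finset.sum_congr rfl hterm, Finset.sum_sub_distrib]
  simp only [Nat.sub_zero, Nat.choose_zero_right, pow_zero, Nat.cast_one]
  ring

/-- The key binomial identity:
`∑_j (-1)^j C(c,j) C(d-j,i) = C(d-c, i-c)` for `c ≤ i`, and `0` otherwise. -/
lemma key_binom (i : ℕ) : ∀ c, ∀ d, c ≤ d →
    ∑ j ∈ range (d+1), (-1:ℤ)^j * (c.choose j : ℤ) * ((d-j).choose i : ℤ)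
      = if c ≤ i then ((d-c).choose (i-c) : ℤ) else 0 := by
  intro c
  induction c with
  | zero =>
    intro d _
    rw [Finset.sum_eq_single 0]
    · simp
    · intro b _ hb
      have : Nat.choose 0 b = 0 := Nat.choose_eq_zero_of_lt (by omega)
      simp [this]
    · intro h; exact absurd (Finset.mem_range.mpr (by omega)) h
  | succ c ih =>
    intro d hd
    rw [L_rec i c d (by omega), ih d (by omega), ih (d-1) (by omega)]
    by_cases h1 : c + 1 ≤ i
    · rw [if_pos (by omega : c ≤ i), if_pos (by omega : c ≤ i), if_pos h1]
      have e1 : d - c = (d - (c+1)) + 1 := by omega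
      have e2 : i - c = (i - (c+1)) + 1 := by omega
      have e3 : d - 1 - c = d - (c+1) := by omega
      rw [e1, e2, e3, Nat.choose_succ_succ]
      push_cast; ring
    · by_cases h2 : c ≤ i
      · rw [if_pos h2, if_pos h2, if_neg h1]
        have h3 : i - c = 0 := by omega
        rw [h3]
        simp
      · rw [if_neg h2, if_neg h2, if_neg h1]
        ring

/-- Dehn–Sommerville relations for Eulerian complexes. -/
theorem stmt14 {V : Type*} [DecidableEq V] (d : ℕ) (Δ : Finset (Finset V))
    (hempty : ∅ ∈ Δ)
    (hdown : ∀ F ∈ Δ, ∀ G, G ⊆ F → G ∈ Δ)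
    (hdimle : ∀ F ∈ Δ, F.card ≤ d)
    (hpure : ∀ F ∈ Δ, ∃ G ∈ Δ, F ⊆ G ∧ G.card = d)
    (heuler : ∀ F ∈ Δ,
      ∑ c ∈ Finset.range (d - F.card + 1), (-1 : ℤ) ^ c * (fnum (lk Δ F) c : ℤ) =
        (-1 : ℤ) ^ (d - F.card)) :
    ∀ i ≤ d, hnum d Δ i = hnum d Δ (d - i) := by
  have heulerH := euler_H d Δ hdown hdimle heuler
  have hDS := DS_f d Δ hdown hdimle heulerH
  intro i hi
  symm
  unfold hnum
  calc ∑ j ∈ range (d - i + 1),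
        (-1:ℤ)^(d-i-j) * (((d-j).choose (d-i-j)) : ℤ) * (fnum Δ j : ℤ)
      = ∑ j ∈ range (d-i+1), (-1:ℤ)^(d-i) * (-1:ℤ)^j * (((d-j).choose i) : ℤ) *
          ((-1:ℤ)^d * ∑ c ∈ range (d+1), (-1:ℤ)^c * ((c.choose j) : ℤ) * (fnum Δ c : ℤ)) := by
        apply Finset.sum_congr rfl
        intro j hj
        rw [mem_range] at hj
        have hpow : (-1:ℤ)^(d-i-j) = (-1:ℤ)^(d-i) * (-1:ℤ)^j := by
          rw [← pow_add]; exact negpow_congr _ _ (by omega)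
        have hch : (d-j).choose (d-i-j) = (d-j).choose i := by
          rw [← Nat.choose_symm (show d-i-j ≤ d-j by omega)]
          congr 1
          omega
        have hsq : (-1:ℤ)^d * (-1:ℤ)^d = 1 := by
          rw [← pow_add]; exact Even.neg_one_pow ⟨d, rfl⟩
        have hf : (fnum Δ j : ℤ)
            = (-1:ℤ)^d * ∑ c ∈ range (d+1), (-1:ℤ)^c * ((c.choose j) : ℤ) * (fnum Δ c : ℤ) := by
          rw [hDS j (by omega), ← mul_assoc, hsq, one_mul]
        rw [hpow, hch, ← hf]
    _ = ∑ j ∈ range (d-i+1), ∑ c ∈ range (d+1),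
          ((-1:ℤ)^(d-i) * (-1:ℤ)^d * (-1:ℤ)^c * (fnum Δ c : ℤ)) *
            ((-1:ℤ)^j * ((c.choose j) : ℤ) * (((d-j).choose i) : ℤ)) := by
        simp only [Finset.mul_sum]
        apply Finset.sum_congr rfl
        intro j _
        apply Finset.sum_congr rfl
        intro c _
        ring
    _ = ∑ c ∈ range (d+1), ∑ j ∈ range (d-i+1),
          ((-1:ℤ)^(d-i) * (-1:ℤ)^d * (-1:ℤ)^c * (fnum Δ c : ℤ)) *
            ((-1:ℤ)^j * ((c.choose j) : ℤ) * (((d-j).choose i) : ℤ)) := Finset.sum_comm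
    _ = ∑ c ∈ range (d+1),
          ((-1:ℤ)^(d-i) * (-1:ℤ)^d * (-1:ℤ)^c * (fnum Δ c : ℤ)) *
            (if c ≤ i then (((d-c).choose (i-c)) : ℤ) else 0) := by
        apply Finset.sum_congr rfl
        intro c hc
        rw [mem_range] at hc
        rw [← Finset.mul_sum]
        congr 1
        rw [Finset.sum_subset (Finset.range_subset_range.mpr (by omega : d-i+1 ≤ d+1)) ?_,
          key_binom i c d (by omega)]
        intro j hj hj'
        rw [mem_range] at hj hj'
        have : (d-j).choose i = 0 := Nat.choose_eq_zero_of_lt (by omega)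
        simp [this]
    _ = ∑ c ∈ range (d+1),
          (if c ≤ i then (-1:ℤ)^(i-c) * (((d-c).choose (i-c)) : ℤ) * (fnum Δ c : ℤ) else 0) := by
        apply Finset.sum_congr rfl
        intro c hc
        rw [mem_range] at hc
        by_cases h : c ≤ i
        · rw [if_pos h, if_pos h]
          have hpow : (-1:ℤ)^(d-i) * (-1:ℤ)^d * (-1:ℤ)^c = (-1:ℤ)^(i-c) := by
            rw [← pow_add, ← pow_add]
            exact negpow_congr _ _ (by omega)
          calc ((-1:ℤ)^(d-i) * (-1:ℤ)^d * (-1:ℤ)^c * (fnum Δ c : ℤ)) *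
                (((d-c).choose (i-c)) : ℤ)
              = ((-1:ℤ)^(d-i) * (-1:ℤ)^d * (-1:ℤ)^c) *
                  ((((d-c).choose (i-c)) : ℤ) * (fnum Δ c : ℤ)) := by ring
            _ = (-1:ℤ)^(i-c) * (((d-c).choose (i-c)) : ℤ) * (fnum Δ c : ℤ) := by
                rw [hpow]; ring
        · rw [if_neg h, if_neg h, mul_zero]
    _ = ∑ c ∈ range (i+1),
          (if c ≤ i then (-1:ℤ)^(i-c) * (((d-c).choose (i-c)) : ℤ) * (fnum Δ c : ℤ) else 0) := by
        rw [← Finset.sum_subset (Finset.range_subset_range.mpr (by omega : i+1 ≤ d+1)) ?_]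
        intro c hc hc'
        rw [mem_range] at hc hc'
        rw [if_neg (by omega)]
    _ = ∑ c ∈ range (i+1), (-1:ℤ)^(i-c) * (((d-c).choose (i-c)) : ℤ) * (fnum Δ c : ℤ) := by
        apply Finset.sum_congr rfl
        intro c hc
        rw [mem_range] at hc
        rw [if_pos (by omega)]
end
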